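/- arXiv:1611.07682 — 5 statements merged into one kernel-verified Lean document; each statement's English description precedes it below -/
import Mathlib

section
/- Let A, B be symmetric n×n real matrices with zero diagonal, C an n×n real matrix, and M a real number. Construct the directed multigraph G with vertices w_1, …, w_{n+1} and, for each i, j ∈ {1,…,n}, an arc (w_j, w_{j+1})^i (the i-th parallel arc from w_j to w_{j+1}); set the source s = w_1 and target t = w_{n+1}. Define linear costs c_e = C_{ij} for e = (w_j, w_{j+1})^i, and interaction costs q_{e,f} = A_{ik}·B_{jl} for e = (w_j, w_{j+1})^i and f = (w_l, w_{l+1})^k with j ≠ l, q_{e,f} = M if j = l and i ≠ k, and q_{e,f} = 0 for all other pairs of arcs. Then for every permutation π of {1,…,n}, the s-t path consisting of the arcs (w_{π(i)}, w_{π(i)+1})^i for i = 1,…,n has cost C(P,c,Q) equal to the QAP objective Σ_{i,k} A_{ik} B_{π(i)π(k)} + Σ_i C_{i,π(i)}. -/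
/-! Along the path of `π` two distinct arcs `(i, π i)` and `(k, π k)` always lie on distinct
layers `π i ≠ π k`, so the penalty `M` never occurs and every interaction cost is
`A i k * B (π i) (π k)`; the pairs `e = f` contribute `0 = A i i * B (π i) (π i)`. -/

open Finset

theorem sum_image_graph {α β M : Type*} [Fintype α] [DecidableEq α] [DecidableEq β]
    [AddCommMonoid M] (σ : α → β) (f : α × β → M) :
    ∑ e ∈ univ.image (fun i => (i, σ i)), f e = ∑ i, f (i, σ i) :=
  sum_image fun _ _ _ _ h => (Prod.ext_iff.1 h).1

theorem layered_interaction_eq {ι κ R : Type*} [DecidableEq ι] [DecidableEq κ] [MulZeroClass R]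
    (A : Matrix ι ι R) (B : Matrix κ κ R) (M : R) (hAd : ∀ i, A i i = 0)
    {σ : ι → κ} (hσ : Function.Injective σ) (i k : ι) :
    (if σ i ≠ σ k then A i k * B (σ i) (σ k) else if i ≠ k then M else 0) =
      A i k * B (σ i) (σ k) := by
  by_cases h : i = k
  · subst h
    simp [hAd]
  · simp [hσ.ne h]

/-- The arc `(i, j)` is the `i`-th parallel arc from `w_j` to `w_{j+1}`, so the path of `π`
has arc set `{(i, π i) : i}`. -/
theorem stmt_0_general (n : ℕ) (A B C : Matrix (Fin n) (Fin n) ℝ) (M : ℝ)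
    (hAd : ∀ i, A i i = 0)
    (c : Fin n × Fin n → ℝ) (q : Fin n × Fin n → Fin n × Fin n → ℝ)
    (hc : ∀ e : Fin n × Fin n, c e = C e.1 e.2)
    (hq : ∀ e f : Fin n × Fin n,
      q e f = if e.2 ≠ f.2 then A e.1 f.1 * B e.2 f.2
              else if e.1 ≠ f.1 then M else 0)
    (π : Equiv.Perm (Fin n)) :
    (∑ e ∈ Finset.univ.image (fun i : Fin n => (i, π i)),
        ∑ f ∈ Finset.univ.image (fun i : Fin n => (i, π i)), q e f)
      + (∑ e ∈ Finset.univ.image (fun i : Fin n => (i, π i)), c e) =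
    (∑ i : Fin n, ∑ k : Fin n, A i k * B (π i) (π k)) + ∑ i : Fin n, C i (π i) := by
  have hq_path : ∀ i k, q (i, π i) (k, π k) = A i k * B (π i) (π k) := fun i k =>
    (hq _ _).trans (layered_interaction_eq A B M hAd π.injective i k)
  simp only [sum_image_graph, hq_path, hc]

/-- Reduction from QAP to QSPP: in the multigraph with vertices `w_1,…,w_{n+1}`, where
the arc `(i,j)` denotes the `i`-th parallel arc from `w_j` to `w_{j+1}`, the cost
`C(P,c,Q)` of the `s`-`t` path consisting of the arcs `(w_{π(i)}, w_{π(i)+1})^i`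
(whose arc set is `{(i, π i) : i}`) equals the QAP objective value of `π`. -/
theorem stmt_0 (n : ℕ) (A B C : Matrix (Fin n) (Fin n) ℝ) (M : ℝ)
    (hAs : ∀ i k, A i k = A k i) (hBs : ∀ j l, B j l = B l j)
    (hAd : ∀ i, A i i = 0) (hBd : ∀ j, B j j = 0)
    (c : Fin n × Fin n → ℝ) (q : Fin n × Fin n → Fin n × Fin n → ℝ)
    (hc : ∀ e : Fin n × Fin n, c e = C e.1 e.2)
    (hq : ∀ e f : Fin n × Fin n,
      q e f = if e.2 ≠ f.2 then A e.1 f.1 * B e.2 f.2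
              else if e.1 ≠ f.1 then M else 0)
    (π : Equiv.Perm (Fin n)) :
    (∑ e ∈ Finset.univ.image (fun i : Fin n => (i, π i)),
        ∑ f ∈ Finset.univ.image (fun i : Fin n => (i, π i)), q e f)
      + (∑ e ∈ Finset.univ.image (fun i : Fin n => (i, π i)), c e) =
    (∑ i : Fin n, ∑ k : Fin n, A i k * B (π i) (π k)) + ∑ i : Fin n, C i (π i) :=
  stmt_0_general n A B C M hAd c q hc hq π
end

section
/- Let G=(V,A) be a directed acyclic graph, s,t ∈ V, c a nonnegative linear cost vector and Q a nonnegative symmetric interaction cost matrix with zero diagonal such that q_{ef}=0 whenever arcs e and f are not adjacent (an adjacent QSPP instance). Define the auxiliary graph G'=(V',A') with V' = {V_{(s,s)}, V_{(t,t)}} ∪ {V_e : e ∈ A} and A' = {(V_{(i,j)}, V_{(j,l)}) : i ≠ l}, and linear costs c'_{(V_e,V_f)} = c_f if e=(s,s), c'_{(V_e,V_f)} = 0 if f=(t,t), and c'_{(V_e,V_f)} = c_f + 2q_{e,f} otherwise. Then the map sending an s-t path P=(v_1,…,v_k) in G (with v_1=s, v_k=t) to P' = (V_{(v_1,v_1)},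 V_{(v_1,v_2)}, V_{(v_2,v_3)}, …, V_{(v_{k-1},v_k)}, V_{(v_k,v_k)}) is a bijection between s-t paths in G and V_{(s,s)}-V_{(t,t)} paths in G', and it preserves cost: C(P,c,Q) = C(P',c'). -/
/-- An `s`-`t` path in the digraph on vertex type `V` with arc relation `A`,
represented as the list of its (distinct) vertices. -/
def IsPath {V : Type*} (A : V → V → Prop) (s t : V) (P : List V) : Prop :=
  2 ≤ P.length ∧ P.head? = some s ∧ P.getLast? = some t ∧ P.Nodup ∧ P.Chain' A

/-- The arcs traversed by a path, as the list of ordered pairs of consecutive vertices. -/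
def arcsOf {V : Type*} (P : List V) : List (V × V) :=
  P.zip P.tail

/-- Linear cost `C(P,c)` of a path. -/
noncomputable def linCost {V : Type*} (c : V × V → ℝ) (P : List V) : ℝ :=
  ((arcsOf P).map c).sum

/-- Total (quadratic) cost `C(P,c,Q)` of a path: the sum of the interaction costs over all
ordered pairs of arcs of `P` plus the sum of the linear costs of the arcs of `P`. -/
noncomputable def cost {V : Type*} (c : V × V → ℝ) (Q : V × V → V × V → ℝ)
    (P : List V) : ℝ :=
  ((arcsOf P).map fun e => ((arcsOf P).map fun f => Q e f).sum).sum + linCost c P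

/-- A QSPP instance `(G,s,t,c,Q)` is linearizable if there is a nonnegative cost vector `c'`
such that `C(P,c,Q) = C(P,c')` for every `s`-`t` path `P`. -/
def Linearizable {V : Type*} (A : V → V → Prop) (s t : V) (c : V × V → ℝ)
    (Q : V × V → V × V → ℝ) : Prop :=
  ∃ c' : V × V → ℝ, (∀ e, 0 ≤ c' e) ∧
    ∀ P, IsPath A s t P → cost c Q P = linCost c' P

open Classical

/-!
The lift sends an `s`-`t` path `v₁ ⋯ vₖ` to its arc sequence padded by the loops `(s, s)` and
`(t, t)`. Consecutive entries of a path in `G'` share an endpoint, so the first components of its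
tail recover a walk in `G`, which is simple because `G` is acyclic. For the cost: two arcs of a
simple path are adjacent only when they are consecutive, so in an adjacent instance the quadratic
part of `C(P, c, Q)` is twice the sum of `q` over consecutive arc pairs, and this is exactly the
surcharge `2 q_{e,f}` that `c'` puts on the arcs `(V_e, V_f)` of the lifted path.
-/

open List

section Arcs

variable {α : Type*}

@[simp]
lemma arcsOf_nil : arcsOf ([] : List α) = [] := rfl

@[simp]
lemma arcsOf_singleton (a : α) : arcsOf [a] = [] := rfl

@[simp]
lemma arcsOf_cons_cons (a b : α) (l : List α) :
    arcsOf (a :: b :: l) = (a, b) :: arcsOf (b :: l) := rfl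

lemma map_fst_arcsOf : ∀ l : List α, (arcsOf l).map Prod.fst = l.dropLast
  | [] | [_] => rfl
  | a :: b :: l => by simp [map_fst_arcsOf (b :: l)]

lemma map_snd_arcsOf (l : List α) : (arcsOf l).map Prod.snd = l.tail :=
  map_snd_zip (by cases l <;> simp)

lemma fst_mem_of_mem_arcsOf {l : List α} {e : α × α} (he : e ∈ arcsOf l) : e.1 ∈ l :=
  (of_mem_zip he).1

lemma snd_mem_of_mem_arcsOf {l : List α} {e : α × α} (he : e ∈ arcsOf l) : e.2 ∈ l :=
  mem_of_mem_tail (of_mem_zip he).2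

lemma isChain_iff_forall_mem_arcsOf {R : α → α → Prop} :
    ∀ {l : List α}, l.IsChain R ↔ ∀ e ∈ arcsOf l, R e.1 e.2
  | [] | [_] => by simp [arcsOf]
  | a :: b :: l => by simp [isChain_cons_cons, isChain_iff_forall_mem_arcsOf (l := b :: l)]

lemma fst_ne_snd_of_mem_arcsOf {l : List α} (hl : l.Nodup) {e : α × α} (he : e ∈ arcsOf l) :
    e.1 ≠ e.2 :=
  isChain_iff_forall_mem_arcsOf.mp hl.isChain e he

lemma mk_self_not_mem_arcsOf {l : List α} (hl : l.Nodup) (x : α) : (x, x) ∉ arcsOf l :=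
  fun hx => fst_ne_snd_of_mem_arcsOf hl hx rfl

lemma nodup_arcsOf {l : List α} (hl : l.Nodup) : (arcsOf l).Nodup :=
  Nodup.of_map Prod.fst (by rw [map_fst_arcsOf]; exact (dropLast_sublist l).nodup hl)

lemma arcsOf_map_fst : ∀ {L : List (α × α)},
    L.IsChain (fun e f => e.2 = f.1) → arcsOf (L.map Prod.fst) = L.dropLast
  | [], _ | [_], _ => rfl
  | e :: f :: L, h => by
    obtain ⟨hef, h⟩ := isChain_cons_cons.mp h
    have ih := arcsOf_map_fst h
    rw [map_cons] at ih
    rw [map_cons, map_cons, arcsOf_cons_cons, ih, ← hef, dropLast_cons_cons]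

lemma arcsOf_append_singleton : ∀ {l : List α} (hl : l ≠ []) (b : α),
    arcsOf (l ++ [b]) = arcsOf l ++ [(l.getLast hl, b)]
  | [a], _, b => rfl
  | a :: a' :: l, _, b => by
    rw [cons_append, cons_append, arcsOf_cons_cons, ← cons_append,
      arcsOf_append_singleton (cons_ne_nil a' l), arcsOf_cons_cons, getLast_cons_cons, cons_append]

lemma isChain_arcsOf {R : α → α → Prop} : ∀ {l : List α}, l.IsChain R → l.Nodup →
    (arcsOf l).IsChain fun e f => R e.1 e.2 ∧ R f.1 f.2 ∧ e.2 = f.1 ∧ e.1 ≠ f.2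
  | [], _, _ | [_], _, _ | [_, _], _, _ => by simp
  | a :: b :: c :: l, h, hl => by
    obtain ⟨hab, h⟩ := isChain_cons_cons.mp h
    rw [arcsOf_cons_cons, arcsOf_cons_cons, isChain_cons_cons, ← arcsOf_cons_cons]
    exact ⟨⟨hab, (isChain_cons_cons.mp h).1, rfl,
      fun hac : a = c => (nodup_cons.mp hl).1 (by simp [hac])⟩, isChain_arcsOf h hl.of_cons⟩

lemma nodup_of_isChain_of_acyclic {R : α → α → Prop} (hR : ∀ a, ¬ Relation.TransGen R a a)
    {l : List α} (h : l.IsChain R) : l.Nodup := by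
  have : IsTrans α (Relation.TransGen R) := ⟨fun _ _ _ => Relation.TransGen.trans⟩
  refine (isChain_iff_pairwise.mp (h.imp fun _ _ => Relation.TransGen.single)).imp ?_
  rintro a _ hab rfl
  exact hR a hab

end Arcs

section PairSum

variable {α R : Type*} [NonAssocSemiring R]

def pairSum (q : α → α → R) (L : List α) : R :=
  (L.map fun a => (L.map fun b => q a b).sum).sum

lemma pairSum_cons {q : α → α → R} (hq : ∀ a b, q a b = q b a) (a : α) (L : List α) :
    pairSum q (a :: L) = q a a + 2 * (L.map (q a)).sum + pairSum q L := by
  have hcol : (L.map fun b => q b a).sum = (L.map (q a)).sum := by simp only [hq _ a]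
  simp only [pairSum, map_cons, sum_cons, sum_map_add, hcol, two_mul]
  abel

end PairSum

section AuxiliaryGraph

variable {V : Type*} {A : V → V → Prop} {s t : V}

lemma IsPath.eq_cons_cons {P : List V} (hP : IsPath A s t P) :
    ∃ b l, P = s :: b :: l ∧ (b :: l).getLast? = some t := by
  obtain ⟨hlen, hhead, hlast, -⟩ := hP
  match P, hlen, hhead, hlast with
  | a :: b :: l, _, ha, hl => exact ⟨b, l, by simpa using ha, by simpa using hl⟩

lemma IsPath.ne {P : List V} (hP : IsPath A s t P) : s ≠ t := by
  obtain ⟨b, l, rfl, hl⟩ := hP.eq_cons_cons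
  rintro rfl
  exact (nodup_cons.mp hP.2.2.2.1).1 (mem_of_getLast? hl)

-- The vertex `V_e` of `G'` is the pair `e` itself; `AuxArc` and `auxCost` are `A'` and `c'`.
def IsAuxNode (A : V → V → Prop) (s t : V) (e : V × V) : Prop :=
  e = (s, s) ∨ e = (t, t) ∨ A e.1 e.2

def AuxArc (A : V → V → Prop) (s t : V) (e f : V × V) : Prop :=
  IsAuxNode A s t e ∧ IsAuxNode A s t f ∧ e.2 = f.1 ∧ e.1 ≠ f.2

noncomputable def auxCost (s t : V) (c : V × V → ℝ) (Q : V × V → V × V → ℝ)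
    (p : (V × V) × (V × V)) : ℝ :=
  if p.1 = (s, s) then c p.2 else if p.2 = (t, t) then 0 else c p.2 + 2 * Q p.1 p.2

lemma isPath_lift {P : List V} (hP : IsPath A s t P) :
    IsPath (AuxArc A s t) (s, s) (t, t) ((s, s) :: (arcsOf P ++ [(t, t)])) := by
  have hst := hP.ne
  obtain ⟨b, l, hPbl, hlast⟩ := hP.eq_cons_cons
  obtain ⟨-, -, -, hnd, hch⟩ := hP
  have hA := isChain_iff_forall_mem_arcsOf.mp hch
  refine ⟨by simp, rfl, by rw [← cons_append, getLast?_concat], ?_,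
    show List.IsChain _ _ from ?_⟩
  · refine nodup_cons.mpr ⟨?_, (nodup_arcsOf hnd).append (nodup_singleton _) ?_⟩
    · simp [mk_self_not_mem_arcsOf hnd s, hst]
    · simpa using mk_self_not_mem_arcsOf hnd t
  rw [isChain_cons, isChain_append]
  refine ⟨?_, (isChain_arcsOf hch hnd).imp fun e f h => ?_, isChain_singleton _, ?_⟩
  · subst hPbl
    simp only [arcsOf_cons_cons, cons_append, head?_cons, Option.mem_def, Option.some_inj]
    rintro _ rfl
    exact ⟨.inl rfl, .inr (.inr (isChain_cons_cons.mp hch).1), rfl,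
      fun h : s = b => (nodup_cons.mp hnd).1 (h ▸ mem_cons_self)⟩
  · exact ⟨.inr (.inr h.1), .inr (.inr h.2.1), h.2.2⟩
  · simp only [head?_cons, Option.mem_def, Option.some_inj]
    rintro e he _ rfl
    have hmem := mem_of_getLast? he
    have het : e.2 = t := by
      have := congrArg (Option.map Prod.snd) he
      rwa [← getLast?_map, map_snd_arcsOf, hPbl, tail_cons, hlast, Option.map_some,
        Option.some_inj, eq_comm] at this
    exact ⟨.inr (.inr (hA e hmem)), .inr (.inl rfl), het,
      het ▸ fst_ne_snd_of_mem_arcsOf hnd hmem⟩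

lemma isPath_map_fst_tail (hacyc : ∀ v, ¬ Relation.TransGen A v v) {P' : List (V × V)}
    (hP' : IsPath (AuxArc A s t) (s, s) (t, t) P') :
    IsPath A s t (P'.tail.map Prod.fst) := by
  obtain ⟨y, M, rfl, hlast⟩ := hP'.eq_cons_cons
  obtain ⟨-, -, -, hnd, hch⟩ := hP'
  have hlinked : (y :: M).IsChain fun e f => e.2 = f.1 := hch.tail.imp fun _ _ h => h.2.2.1
  have hnode : ∀ e ∈ y :: M, IsAuxNode A s t e := by
    intro e he
    rw [← tail_cons (a := (s, s)) (as := y :: M), ← map_snd_arcsOf] at he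
    obtain ⟨p, hp, rfl⟩ := mem_map.mp he
    exact (isChain_iff_forall_mem_arcsOf.mp hch p hp).2.1
  have hA : ∀ e ∈ (y :: M).dropLast, A e.1 e.2 := by
    intro e he
    have hs : e ≠ (s, s) := fun h => (nodup_cons.mp hnd).1 (h ▸ mem_of_mem_dropLast he)
    have ht : e ≠ (t, t) := by
      have := (nodup_cons.mp hnd).2
      rw [← dropLast_append_getLast? _ hlast, nodup_append] at this
      exact fun h => this.2.2 e he _ (mem_singleton_self _) h
    exact ((hnode e (mem_of_mem_dropLast he)).resolve_left hs).resolve_left ht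
  have hchA : ((y :: M).map Prod.fst).IsChain A := by
    rw [isChain_iff_forall_mem_arcsOf, arcsOf_map_fst hlinked]
    exact hA
  refine ⟨?_, ?_, by rw [tail_cons, getLast?_map, hlast]; rfl,
    nodup_of_isChain_of_acyclic hacyc hchA, hchA⟩
  · rcases M with _ | ⟨z, M⟩
    · obtain rfl : y = (t, t) := by simpa using hlast
      obtain ⟨-, -, hst, hts⟩ := (isChain_cons_cons.mp hch).1
      exact absurd hst hts
    · simp
  · obtain ⟨-, -, hy, -⟩ := (isChain_cons_cons.mp hch).1
    simp [← hy]

lemma map_fst_tail_lift {P : List V} (hP : P.getLast? = some t) :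
    ((s, s) :: (arcsOf P ++ [(t, t)])).tail.map Prod.fst = P := by
  rw [tail_cons, map_append, map_fst_arcsOf]
  exact dropLast_append_getLast? t hP

lemma lift_map_fst_tail {P' : List (V × V)} (hP' : IsPath (AuxArc A s t) (s, s) (t, t) P') :
    (s, s) :: (arcsOf (P'.tail.map Prod.fst) ++ [(t, t)]) = P' := by
  obtain ⟨y, M, rfl, hlast⟩ := hP'.eq_cons_cons
  have hlinked : (y :: M).IsChain fun e f => e.2 = f.1 :=
    hP'.2.2.2.2.tail.imp fun _ _ h => h.2.2.1
  rw [tail_cons, arcsOf_map_fst hlinked, dropLast_append_getLast? _ hlast]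

lemma linCost_auxCost {c : V × V → ℝ} {Q : V × V → V × V → ℝ} {E : List (V × V)}
    (hE : E ≠ []) (hs : (s, s) ∉ E) (ht : (t, t) ∉ E) :
    linCost (auxCost s t c Q) ((s, s) :: (E ++ [(t, t)])) =
      (E.map c).sum + 2 * ((arcsOf E).map fun p => Q p.1 p.2).sum := by
  obtain ⟨e, E', rfl⟩ := exists_cons_of_ne_nil hE
  have hlast : auxCost s t c Q ((e :: E').getLast (cons_ne_nil _ _), (t, t)) = 0 := by
    rw [auxCost, if_neg fun h : _ = (s, s) => hs (h ▸ getLast_mem _), if_pos rfl]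
  have hmid : ∀ p ∈ arcsOf (e :: E'), auxCost s t c Q p = c p.2 + 2 * Q p.1 p.2 := by
    intro p hp
    rw [auxCost, if_neg fun h : p.1 = (s, s) => hs (h ▸ fst_mem_of_mem_arcsOf hp),
      if_neg fun h : p.2 = (t, t) => ht (h ▸ snd_mem_of_mem_arcsOf hp)]
  rw [linCost, ← cons_append, arcsOf_append_singleton (cons_ne_nil _ _), getLast_cons_cons,
    map_append, sum_append, arcsOf_cons_cons, map_cons, sum_cons, map_singleton, sum_singleton,
    hlast, map_congr_left hmid, sum_map_add, sum_map_mul_left]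
  have hsnd : ((arcsOf (e :: E')).map fun p => c p.2) = E'.map c := by
    conv_rhs => rw [← tail_cons (a := e) (as := E'), ← map_snd_arcsOf, map_map]
    rfl
  simp [auxCost, hsnd, add_assoc]

lemma pairSum_arcsOf {Q : V × V → V × V → ℝ}
    (hQs : ∀ e f, Q e f = Q f e) (hQd : ∀ e, Q e e = 0)
    (hadj : ∀ e f : V × V, A e.1 e.2 → A f.1 f.2 →
      ¬(e.2 = f.1 ∨ f.2 = e.1) → Q e f = 0) :
    ∀ {P : List V}, P.Nodup → P.IsChain A →
      pairSum Q (arcsOf P) = 2 * ((arcsOf (arcsOf P)).map fun p => Q p.1 p.2).sum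
  | [], _, _ | [_], _, _ => by simp [pairSum]
  | [a, b], _, _ => by simp [pairSum, hQd]
  | a :: b :: c :: l, hnd, hch => by
    have hab := (isChain_cons_cons.mp hch).1
    have hA := isChain_iff_forall_mem_arcsOf.mp (isChain_cons_cons.mp hch).2.tail
    -- arcs of `c :: l` share no endpoint with `(a, b)`, since `a, b ∉ c :: l`
    have hfar : ((arcsOf (c :: l)).map (Q (a, b))).sum = 0 := by
      refine sum_eq_zero fun x hx => ?_
      obtain ⟨f, hf, rfl⟩ := mem_map.mp hx
      refine hadj _ _ hab (hA f hf) ?_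
      rintro ((h : b = f.1) | (h : f.2 = a))
      · exact (nodup_cons.mp hnd.of_cons).1 (h ▸ fst_mem_of_mem_arcsOf hf)
      · exact (nodup_cons.mp hnd).1 (mem_cons_of_mem _ (h ▸ snd_mem_of_mem_arcsOf hf))
    rw [arcsOf_cons_cons, pairSum_cons hQs, pairSum_arcsOf hQs hQd hadj hnd.of_cons
      (isChain_cons_cons.mp hch).2, arcsOf_cons_cons, map_cons, sum_cons, hfar, hQd,
      arcsOf_cons_cons, map_cons, sum_cons]
    ring

lemma cost_eq_linCost_auxCost {c : V × V → ℝ} {Q : V × V → V × V → ℝ}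
    (hQs : ∀ e f, Q e f = Q f e) (hQd : ∀ e, Q e e = 0)
    (hadj : ∀ e f : V × V, A e.1 e.2 → A f.1 f.2 → ¬(e.2 = f.1 ∨ f.2 = e.1) → Q e f = 0)
    {P : List V} (hP : IsPath A s t P) :
    cost c Q P = linCost (auxCost s t c Q) ((s, s) :: (arcsOf P ++ [(t, t)])) := by
  obtain ⟨b, l, hPbl, -⟩ := hP.eq_cons_cons
  obtain ⟨-, -, -, hnd, hch⟩ := hP
  rw [linCost_auxCost (by simp [hPbl]) (mk_self_not_mem_arcsOf hnd s)
    (mk_self_not_mem_arcsOf hnd t), ← pairSum_arcsOf hQs hQd hadj hnd hch, add_comm]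
  rfl

end AuxiliaryGraph

theorem stmt_1_general {V : Type*} (A : V → V → Prop) (s t : V)
    (hacyc : ∀ v, ¬ Relation.TransGen A v v)
    (c : V × V → ℝ) (Q : V × V → V × V → ℝ)
    (hQs : ∀ e f, Q e f = Q f e) (hQd : ∀ e, Q e e = 0)
    (hadj : ∀ e f : V × V, A e.1 e.2 → A f.1 f.2 →
      ¬(e.2 = f.1 ∨ f.2 = e.1) → Q e f = 0)
    (A' : (V × V) → (V × V) → Prop)
    (hA' : ∀ e f : V × V, A' e f ↔
      ((e = (s, s) ∨ e = (t, t) ∨ A e.1 e.2) ∧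
       (f = (s, s) ∨ f = (t, t) ∨ A f.1 f.2) ∧ e.2 = f.1 ∧ e.1 ≠ f.2))
    (c' : (V × V) × (V × V) → ℝ)
    (hc' : ∀ e f : V × V, c' (e, f) =
      if e = (s, s) then c f else if f = (t, t) then 0 else c f + 2 * Q e f) :
    ∃ F : {P : List V // IsPath A s t P} ≃
          {P' : List (V × V) // IsPath A' (s, s) (t, t) P'},
      ∀ P : {P : List V // IsPath A s t P},
        (F P).val = (s, s) :: (arcsOf P.val ++ [(t, t)]) ∧
        cost c Q P.val = linCost c' (F P).val := by
  obtain rfl : A' = AuxArc A s t := funext₂ fun e f => propext (hA' e f)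
  obtain rfl : c' = auxCost s t c Q := funext fun p => hc' p.1 p.2
  exact ⟨{ toFun := fun P => ⟨_, isPath_lift P.2⟩
           invFun := fun P' => ⟨_, isPath_map_fst_tail hacyc P'.2⟩
           left_inv := fun P => Subtype.ext (map_fst_tail_lift P.2.2.2.1)
           right_inv := fun P' => Subtype.ext (lift_map_fst_tail P'.2) },
    fun P => ⟨rfl, cost_eq_linCost_auxCost hQs hQd hadj P.2⟩⟩

/-- The map `P ↦ (V_{(s,s)}, V_{(v_1,v_2)}, …, V_{(v_{k-1},v_k)}, V_{(t,t)})` is a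
cost-preserving bijection between the `s`-`t` paths of an adjacent QSPP instance on a
DAG `G` and the `V_{(s,s)}`-`V_{(t,t)}` paths of the auxiliary SPP instance on `G'`. -/
theorem stmt_1 {V : Type*} (A : V → V → Prop) (s t : V)
    (hacyc : ∀ v, ¬ Relation.TransGen A v v)
    (c : V × V → ℝ) (Q : V × V → V × V → ℝ)
    (hc : ∀ e, 0 ≤ c e) (hQ0 : ∀ e f, 0 ≤ Q e f)
    (hQs : ∀ e f, Q e f = Q f e) (hQd : ∀ e, Q e e = 0)
    (hadj : ∀ e f : V × V, A e.1 e.2 → A f.1 f.2 →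
      ¬(e.2 = f.1 ∨ f.2 = e.1) → Q e f = 0)
    (A' : (V × V) → (V × V) → Prop)
    (hA' : ∀ e f : V × V, A' e f ↔
      ((e = (s, s) ∨ e = (t, t) ∨ A e.1 e.2) ∧
       (f = (s, s) ∨ f = (t, t) ∨ A f.1 f.2) ∧ e.2 = f.1 ∧ e.1 ≠ f.2))
    (c' : (V × V) × (V × V) → ℝ)
    (hc' : ∀ e f : V × V, c' (e, f) =
      if e = (s, s) then c f else if f = (t, t) then 0 else c f + 2 * Q e f) :
    ∃ F : {P : List V // IsPath A s t P} ≃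
          {P' : List (V × V) // IsPath A' (s, s) (t, t) P'},
      ∀ P : {P : List V // IsPath A s t P},
        (F P).val = (s, s) :: (arcsOf P.val ++ [(t, t)]) ∧
        cost c Q P.val = linCost c' (F P).val :=
  stmt_1_general A s t hacyc c Q hQs hQd hadj A' hA' c' hc'
end

section
/- Let I = (G,s,t,c,Q) be a QSPP instance such that Q + Diag(c) is a nonnegative symmetric product matrix, i.e., Q + Diag(c) = a aᵀ for some nonnegative vector a indexed by the arcs of G. Then for every s-t path P in G, C(P,c,Q) = (Σ_{e∈P} a_e)². Consequently, an s-t path minimizes C(P,c,Q) if and only if it minimizes the linear cost C(P,a), so an optimal solution of I is obtained by solving the shortest path problem with cost vector a. -/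
open Classical

/-! Along a path the arcs are pairwise distinct, so in the double sum defining `C(P,c,Q)` the
diagonal terms `(e, e)` carry exactly the linear costs `c e`, and the entries of `Q + Diag(c)`
summed over the arcs of `P` give `∑ₑ ∑_f aₑ a_f = (∑ₑ aₑ)²`. As `C(P,a) ≥ 0`, squaring preserves
the order between paths. -/

lemma rel_of_mem_arcsOf {V : Type*} {A : V → V → Prop} :
    ∀ {P : List V}, P.IsChain A → ∀ e ∈ arcsOf P, A e.1 e.2
  | [], _, _, he => by simp [arcsOf] at he
  | [_], _, _, he => by simp [arcsOf] at he
  | _ :: _ :: _, h, e, he => by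
    rw [List.isChain_cons_cons] at h
    simp only [arcsOf, List.tail_cons, List.zip_cons_cons, List.mem_cons] at he
    rcases he with rfl | he
    exacts [h.1, rel_of_mem_arcsOf h.2 e he]

lemma nodup_arcsOf_s6 {V : Type*} {P : List V} (hP : P.Nodup) : (arcsOf P).Nodup :=
  List.Nodup.of_map Prod.snd <| by
    rw [arcsOf, List.map_snd_zip (by simp)]
    exact hP.sublist (List.tail_sublist P)

theorem Finset.sum_sum_add_sum_eq_sq_sum {ι : Type*} [DecidableEq ι] (S : Finset ι)
    (c a : ι → ℝ) (Q : ι → ι → ℝ)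
    (h : ∀ e ∈ S, ∀ f ∈ S, Q e f + (if e = f then c e else 0) = a e * a f) :
    ∑ e ∈ S, ∑ f ∈ S, Q e f + ∑ e ∈ S, c e = (∑ e ∈ S, a e) ^ 2 := by
  rw [sq, Finset.sum_mul_sum, ← Finset.sum_add_distrib]
  refine Finset.sum_congr rfl fun e he => ?_
  have hdiag : ∑ f ∈ S, (if e = f then c e else 0) = c e := by simp [he]
  rw [← hdiag, ← Finset.sum_add_distrib]
  exact Finset.sum_congr rfl fun f hf => h e he f hf

theorem cost_eq_linCost_sq {V : Type*} {A : V → V → Prop} {c a : V × V → ℝ}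
    {Q : V × V → V × V → ℝ} {P : List V} (hnd : P.Nodup) (hch : P.IsChain A)
    (hprod : ∀ e f : V × V, A e.1 e.2 → A f.1 f.2 →
      Q e f + (if e = f then c e else 0) = a e * a f) :
    cost c Q P = linCost a P ^ 2 := by
  have hL := nodup_arcsOf_s6 hnd
  simp only [cost, linCost, ← List.sum_toFinset _ hL]
  refine Finset.sum_sum_add_sum_eq_sq_sum _ c a Q fun e he f hf => ?_
  rw [List.mem_toFinset] at he hf
  exact hprod e f (rel_of_mem_arcsOf hch e he) (rel_of_mem_arcsOf hch f hf)

lemma linCost_nonneg {V : Type*} {a : V × V → ℝ} (ha : ∀ e, 0 ≤ a e) (P : List V) :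
    0 ≤ linCost a P :=
  List.sum_nonneg fun _ hx => by
    obtain ⟨e, -, rfl⟩ := List.mem_map.mp hx
    exact ha e

lemma forall_le_iff_of_eq_sq {α : Type*} {p : α → Prop} {f g : α → ℝ}
    (hg : ∀ x, 0 ≤ g x) (hfg : ∀ x, p x → f x = g x ^ 2) {x : α} (hx : p x) :
    (∀ y, p y → f x ≤ f y) ↔ (∀ y, p y → g x ≤ g y) :=
  forall₂_congr fun y hy => by rw [hfg x hx, hfg y hy, sq_le_sq₀ (hg x) (hg y)]

theorem stmt_6_general {V : Type*} (A : V → V → Prop) (s t : V)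
    (c : V × V → ℝ) (Q : V × V → V × V → ℝ)
    (a : V × V → ℝ) (ha : ∀ e, 0 ≤ a e)
    (hprod : ∀ e f : V × V, A e.1 e.2 → A f.1 f.2 →
      Q e f + (if e = f then c e else 0) = a e * a f) :
    (∀ P, IsPath A s t P → cost c Q P = (linCost a P) ^ 2) ∧
    ∀ P, IsPath A s t P →
      ((∀ P', IsPath A s t P' → cost c Q P ≤ cost c Q P') ↔
       (∀ P', IsPath A s t P' → linCost a P ≤ linCost a P')) := by
  have hsq : ∀ P, IsPath A s t P → cost c Q P = linCost a P ^ 2 :=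
    fun P ⟨_, _, _, hnd, hch⟩ => cost_eq_linCost_sq hnd hch hprod
  exact ⟨hsq, fun P hP => forall_le_iff_of_eq_sq (linCost_nonneg ha) hsq hP⟩

/-- If `Q + Diag(c) = a aᵀ` for a nonnegative vector `a`, then `C(P,c,Q) = (Σ_{e∈P} a_e)²`
for every `s`-`t` path `P`; consequently a path minimizes the quadratic cost iff it
minimizes the linear cost given by `a`. -/
theorem stmt_6 {V : Type*} (A : V → V → Prop) (s t : V)
    (c : V × V → ℝ) (Q : V × V → V × V → ℝ)
    (hc : ∀ e, 0 ≤ c e) (hQ0 : ∀ e f, 0 ≤ Q e f)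
    (hQs : ∀ e f, Q e f = Q f e) (hQd : ∀ e, Q e e = 0)
    (a : V × V → ℝ) (ha : ∀ e, 0 ≤ a e)
    (hprod : ∀ e f : V × V, A e.1 e.2 → A f.1 f.2 →
      Q e f + (if e = f then c e else 0) = a e * a f) :
    (∀ P, IsPath A s t P → cost c Q P = (linCost a P) ^ 2) ∧
    ∀ P, IsPath A s t P →
      ((∀ P', IsPath A s t P' → cost c Q P ≤ cost c Q P') ↔
       (∀ P', IsPath A s t P' → linCost a P ≤ linCost a P')) :=
  stmt_6_general A s t c Q a ha hprod
end

section
/- Let T_4 be a tournament on four vertices, i.e., a digraph in which every pair of distinct vertices is connected by exactly one directed arc, and let I = (T_4, s, t, c, Q) be any QSPP instance on T_4 with nonnegative linear costs c and nonnegative symmetric interaction cost matrix Q with zero diagonal. Then I is linearizable. -/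
/-!
On at most four vertices every `s`-`t` path is `[s, t]`, `[s, x, t]` or `[s, x, y, t]`. Choose on
each path a private arc and let `c'` put the whole cost `C(P,c,Q)` of `P` on its private arc and `0`
elsewhere; this linearizes as soon as no path contains the private arc of another one.
The private arc of `[s, t]` is `(s, t)` and that of `[s, x, y, t]` is `(x, y)`: in a tournament
`[s, y, x, t]` is then not a path. For `[s, x, t]` it is `(s, x)` if `x` is the head of an arc
between the two inner vertices and `(x, t)` otherwise. On a path `[s, x, y, t]` the vertex `y` is
such a head and `x` is not, so neither `(s, x)` nor `(y, t)` is private.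
-/

section PrivateArcs

variable {V : Type*}

lemma cost_nonneg {c : V × V → ℝ} {Q : V × V → V × V → ℝ} (hc : ∀ e, 0 ≤ c e)
    (hQ : ∀ e f, 0 ≤ Q e f) (P : List V) : 0 ≤ cost c Q P := by
  refine add_nonneg (List.sum_nonneg ?_) (List.sum_nonneg ?_) <;> simp only [List.mem_map]
  · rintro _ ⟨e, -, rfl⟩
    exact List.sum_nonneg (by simp only [List.mem_map]; rintro _ ⟨f, -, rfl⟩; exact hQ e f)
  · rintro _ ⟨e, -, rfl⟩
    exact hc e

variable (A : V → V → Prop) (s t : V)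

def IsInnerHead (v : V) : Prop :=
  ∃ w, w ≠ s ∧ w ≠ t ∧ w ≠ v ∧ A w v

open Classical in
noncomputable def privateArcCost (c : V × V → ℝ) (Q : V × V → V × V → ℝ) (e : V × V) : ℝ :=
  if e.1 = s ∧ e.2 = t then cost c Q [s, t]
  else if e.1 = s ∧ e.2 ≠ t ∧ IsInnerHead A s t e.2 then cost c Q [s, e.2, t]
  else if e.2 = t ∧ e.1 ≠ s ∧ e.1 ≠ t ∧ ¬ IsInnerHead A s t e.1 then cost c Q [s, e.1, t]
  else if e.1 ≠ s ∧ e.1 ≠ t ∧ e.2 ≠ s ∧ e.2 ≠ t then cost c Q [s, e.1, e.2, t]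
  else 0

variable {A s t} {c : V × V → ℝ} {Q : V × V → V × V → ℝ}

lemma privateArcCost_nonneg (h : ∀ P, 0 ≤ cost c Q P) (e : V × V) :
    0 ≤ privateArcCost A s t c Q e := by
  unfold privateArcCost
  split_ifs <;> first | exact h _ | exact le_rfl

lemma linCost_privateArcCost_pair :
    linCost (privateArcCost A s t c Q) [s, t] = cost c Q [s, t] := by
  simp [linCost, arcsOf, privateArcCost]

lemma linCost_privateArcCost_triple {x : V} (hsx : s ≠ x) (hxt : x ≠ t) :
    linCost (privateArcCost A s t c Q) [s, x, t] = cost c Q [s, x, t] := by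
  by_cases hx : IsInnerHead A s t x <;>
    simp [linCost, arcsOf, privateArcCost, hsx.symm, hxt, hx]

lemma linCost_privateArcCost_quad {x y : V} (hsx : s ≠ x) (hsy : s ≠ y) (hxt : x ≠ t)
    (hyt : y ≠ t) (hx : ¬ IsInnerHead A s t x) (hy : IsInnerHead A s t y) :
    linCost (privateArcCost A s t c Q) [s, x, y, t] = cost c Q [s, x, y, t] := by
  simp [linCost, arcsOf, privateArcCost, hsx.symm, hsy.symm, hxt, hyt, hx, hy]

end PrivateArcs

section SmallDigraphs

variable {V : Type*} [Fintype V] {A : V → V → Prop} {s t : V}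

lemma IsPath.eq_of_card_le_four {P : List V} (hcard : Fintype.card V ≤ 4)
    (hP : IsPath A s t P) : P = [s, t] ∨ (∃ x, P = [s, x, t]) ∨ ∃ x y, P = [s, x, y, t] := by
  obtain ⟨hlen, hhead, hlast, hnd, -⟩ := hP
  have hlen4 : P.length ≤ 4 := hnd.length_le_card.trans hcard
  match P, hlen, hlen4 with
  | [a, b], _, _ => simp_all
  | [a, x, b], _, _ => simp_all
  | [a, x, y, b], _, _ => simp_all
  | _ :: _ :: _ :: _ :: _ :: _, _, h => simp at h; omega

lemma List.Nodup.mem_of_card_le_length {l : List V} (hl : l.Nodup)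
    (hcard : Fintype.card V ≤ l.length) (w : V) : w ∈ l := by
  classical
  have huniv : l.toFinset = Finset.univ :=
    Finset.eq_univ_of_card _ <| le_antisymm (Finset.card_le_univ _)
      (by rwa [List.toFinset_card_of_nodup hl])
  exact List.mem_toFinset.mp (huniv ▸ Finset.mem_univ w)

lemma not_isInnerHead_of_isPath {x y : V} (hcard : Fintype.card V ≤ 4)
    (hP : IsPath A s t [s, x, y, t]) (hyx : ¬ A y x) : ¬ IsInnerHead A s t x := by
  rintro ⟨w, hws, hwt, hwx, hwA⟩
  have hw : w = s ∨ w = x ∨ w = y ∨ w = t := by simpa using hP.2.2.2.1.mem_of_card_le_length hcard w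
  rcases hw with rfl | rfl | rfl | rfl
  exacts [hws rfl, hwx rfl, hyx hwA, hwt rfl]

end SmallDigraphs

theorem stmt_13_general {V : Type*} [Fintype V] (hcard : Fintype.card V = 4)
    (A : V → V → Prop)
    (htour : ∀ u v : V, u ≠ v → Xor' (A u v) (A v u))
    (s t : V) (c : V × V → ℝ) (Q : V × V → V × V → ℝ)
    (hc : ∀ e, 0 ≤ c e) (hQ0 : ∀ e f, 0 ≤ Q e f) :
    Linearizable A s t c Q := by
  refine ⟨privateArcCost A s t c Q, privateArcCost_nonneg (cost_nonneg hc hQ0), fun P hP => ?_⟩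
  rcases hP.eq_of_card_le_four hcard.le with rfl | ⟨x, rfl⟩ | ⟨x, y, rfl⟩
  · exact linCost_privateArcCost_pair.symm
  · have hnd : (s ≠ x ∧ s ≠ t) ∧ x ≠ t := by simpa using hP.2.2.2.1
    exact (linCost_privateArcCost_triple hnd.1.1 hnd.2).symm
  · have hnd : (s ≠ x ∧ s ≠ y ∧ s ≠ t) ∧ (x ≠ y ∧ x ≠ t) ∧ y ≠ t := by simpa using hP.2.2.2.1
    have hch : List.IsChain A [s, x, y, t] := hP.2.2.2.2
    have hxy : A x y := (by simpa using hch : A s x ∧ A x y ∧ A y t).2.1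
    have hyx : ¬ A y x := fun hyx => by rcases htour x y hnd.2.1.1 with h | h <;> tauto
    have hy : IsInnerHead A s t y := ⟨x, hnd.1.1.symm, hnd.2.1.2, hnd.2.1.1, hxy⟩
    exact (linCost_privateArcCost_quad hnd.1.1 hnd.1.2.1 hnd.2.1.2 hnd.2.2
      (not_isInnerHead_of_isPath hcard.le hP hyx) hy).symm

/-- Every QSPP instance on a tournament with four vertices is linearizable. -/
theorem stmt_13 {V : Type*} [Fintype V] (hcard : Fintype.card V = 4)
    (A : V → V → Prop) (hirr : ∀ v, ¬ A v v)
    (htour : ∀ u v : V, u ≠ v → Xor' (A u v) (A v u))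
    (s t : V) (c : V × V → ℝ) (Q : V × V → V × V → ℝ)
    (hc : ∀ e, 0 ≤ c e) (hQ0 : ∀ e f, 0 ≤ Q e f)
    (hQs : ∀ e f, Q e f = Q f e) (hQd : ∀ e, Q e e = 0) :
    Linearizable A s t c Q :=
  stmt_13_general hcard A htour s t c Q hc hQ0
end

section
/- Let p, q ≥ 2 and let J = {(v_{i,j}, v_{i+1,j}) : 1 ≤ i ≤ p−1, 1 ≤ j ≤ q−1} ∪ {(v_{1,1}, v_{1,2})} be a subset of the arcs of the directed grid graph G_{p,q}, with s = v_{1,1}, t = v_{p,q}. If c and d are two (real-valued) linear cost vectors on the arcs of G_{p,q} that both vanish on every arc outside J, and C(P,c) = C(P,d) for every s-t path P, then c = d. -/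
/-- The arc relation of the directed grid graph `G_{p,q}` (vertices indexed from `0`,
so vertex `(i,j)` with `i < p`, `j < q` corresponds to `v_{i+1,j+1}`). -/
def gridArc (p q : ℕ) : ℕ × ℕ → ℕ × ℕ → Prop := fun a b =>
  a.1 < p ∧ a.2 < q ∧
    ((b = (a.1 + 1, a.2) ∧ a.1 + 1 < p) ∨ (b = (a.1, a.2 + 1) ∧ a.2 + 1 < q))

/-- The arc set `J` of the directed grid graph `G_{p,q}` (0-based indexing): the vertical
arcs `((i,j),(i+1,j))` with `i+1 ≤ p-1`, `j+1 ≤ q-1`, together with the arc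
`((0,0),(0,1))`. -/
def gridJ (p q : ℕ) : Set ((ℕ × ℕ) × (ℕ × ℕ)) :=
  {e | (∃ i j, i + 1 < p ∧ j + 1 < q ∧ e = ((i, j), (i + 1, j))) ∨
    e = ((0, 0), (0, 1))}

/-!
Put `f = c - d`: it vanishes off `J`, and every `s`-`t` path has `f`-cost zero. Every monotone
lattice path from `s` to `t` is such a path. The one along the first row and down the last
column meets `J` only in `(v₁₁, v₁₂)`, so `f` vanishes there, hence on every horizontal arc.
The staircase that goes right to column `j`, down `k` rows, right to the last
column and down to `t` then has `f`-cost the sum of `f` over the first `k` arcs of column `j`;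
since this vanishes for every `k`, `f` vanishes on each arc of `J`.
-/

theorem linCost_sub {V : Type*} (c d : V × V → ℝ) (P : List V) :
    linCost (c - d) P = linCost c P - linCost d P :=
  Multiset.sum_map_sub (m := (arcsOf P : Multiset (V × V))) (f := c) (g := d)

theorem linCost_cons_cons {V : Type*} (c : V × V → ℝ) (a b : V) (P : List V) :
    linCost c (a :: b :: P) = c (a, b) + linCost c (b :: P) := by
  simp [linCost, arcsOf]

namespace GridPath

/-- A monotone lattice path is encoded by its moves: `true` steps down a row, `false` steps
right a column. -/
def step (v : ℕ × ℕ) : Bool → ℕ × ℕ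
  | true => (v.1 + 1, v.2)
  | false => (v.1, v.2 + 1)

def route (v : ℕ × ℕ) : List Bool → List (ℕ × ℕ)
  | [] => [v]
  | b :: ms => v :: route (step v b) ms

theorem head?_route (v : ℕ × ℕ) (ms : List Bool) : (route v ms).head? = some v := by
  cases ms <;> rfl

theorem step_fst_add_snd (v : ℕ × ℕ) (b : Bool) :
    (step v b).1 + (step v b).2 = v.1 + v.2 + 1 := by
  cases b <;> simp only [step] <;> omega

theorem map_sum_route (v : ℕ × ℕ) (ms : List Bool) :
    (route v ms).map (fun w => w.1 + w.2) = List.range' (v.1 + v.2) (ms.length + 1) := by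
  induction ms generalizing v with
  | nil => rfl
  | cons b ms ih =>
    rw [route, List.map_cons, ih, step_fst_add_snd, List.length_cons,
      List.range'_succ (s := v.1 + v.2)]

theorem nodup_route (v : ℕ × ℕ) (ms : List Bool) : (route v ms).Nodup :=
  .of_map _ (map_sum_route v ms ▸ List.nodup_range')

theorem length_route (v : ℕ × ℕ) (ms : List Bool) : (route v ms).length = ms.length + 1 := by
  simpa using congrArg List.length (map_sum_route v ms)

theorem getLast?_route (v : ℕ × ℕ) (ms : List Bool) :
    (route v ms).getLast? = some (v.1 + ms.count true, v.2 + ms.count false) := by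
  induction ms generalizing v with
  | nil => simp [route]
  | cons b ms ih =>
    rw [route, List.getLast?_cons, ih, Option.getD_some, List.count_cons, List.count_cons]
    cases b <;> simp only [step, Option.some.injEq, Prod.mk.injEq] <;> grind

theorem isChain_gridArc_route {p q : ℕ} (v : ℕ × ℕ) (ms : List Bool)
    (hp : v.1 + ms.count true < p) (hq : v.2 + ms.count false < q) :
    (route v ms).IsChain (gridArc p q) := by
  induction ms generalizing v with
  | nil => exact List.isChain_singleton v
  | cons b ms ih =>
    rw [route, List.isChain_cons, head?_route]
    cases b <;> simp only [List.count_cons, step, Option.mem_def, Option.some.injEq, forall_eq']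
      at hp hq ⊢ <;> grind [gridArc]

theorem linCost_route_nil (f : (ℕ × ℕ) × (ℕ × ℕ) → ℝ) (v : ℕ × ℕ) :
    linCost f (route v []) = 0 := rfl

theorem linCost_route_cons (f : (ℕ × ℕ) × (ℕ × ℕ) → ℝ) (v : ℕ × ℕ) (b : Bool) (ms : List Bool) :
    linCost f (route v (b :: ms)) = f (v, step v b) + linCost f (route (step v b) ms) := by
  cases ms <;> exact linCost_cons_cons ..

theorem linCost_route_replicate_true_append (f : (ℕ × ℕ) × (ℕ × ℕ) → ℝ) (x y k : ℕ)
    (ms : List Bool) :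
    linCost f (route (x, y) (List.replicate k true ++ ms)) =
      ∑ r ∈ Finset.range k, f ((x + r, y), (x + r + 1, y)) + linCost f (route (x + k, y) ms) := by
  induction k generalizing x with
  | zero => simp
  | succ k ih =>
    rw [List.replicate_succ, List.cons_append, linCost_route_cons, step, ih,
      Finset.sum_range_succ']
    simp only [add_assoc, add_comm 1, add_zero]
    ring

theorem linCost_route_replicate_false_append (f : (ℕ × ℕ) × (ℕ × ℕ) → ℝ) (x y k : ℕ)
    (ms : List Bool) :
    linCost f (route (x, y) (List.replicate k false ++ ms)) =
      ∑ t ∈ Finset.range k, f ((x, y + t), (x, y + t + 1)) + linCost f (route (x, y + k) ms) := by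
  induction k generalizing y with
  | zero => simp
  | succ k ih =>
    rw [List.replicate_succ, List.cons_append, linCost_route_cons, step, ih,
      Finset.sum_range_succ']
    simp only [add_assoc, add_comm 1, add_zero]
    ring

theorem linCost_route_staircase (f : (ℕ × ℕ) × (ℕ × ℕ) → ℝ) (j k m n : ℕ) :
    linCost f (route (0, 0) (List.replicate j false ++ List.replicate k true ++
        List.replicate m false ++ List.replicate n true)) =
      ∑ t ∈ Finset.range j, f ((0, t), (0, t + 1)) + ∑ r ∈ Finset.range k, f ((r, j), (r + 1, j)) +
        ∑ t ∈ Finset.range m, f ((k, j + t), (k, j + t + 1)) +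
        ∑ r ∈ Finset.range n, f ((k + r, j + m), (k + r + 1, j + m)) := by
  rw [← List.append_nil (List.replicate n true)]
  simp only [List.append_assoc, linCost_route_replicate_true_append,
    linCost_route_replicate_false_append, linCost_route_nil, zero_add, add_zero, add_assoc]

theorem isPath_route {p q : ℕ} (hpq : 2 < p + q) (ms : List Bool)
    (hp : ms.count true + 1 = p) (hq : ms.count false + 1 = q) :
    IsPath (gridArc p q) (0, 0) (p - 1, q - 1) (route (0, 0) ms) := by
  have hlen := List.count_true_add_count_false ms
  refine ⟨?_, head?_route _ _, ?_, nodup_route _ _,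
    isChain_gridArc_route _ _ (by rw [zero_add]; omega) (by rw [zero_add]; omega)⟩
  · rw [length_route]; omega
  · rw [getLast?_route, ← hp, ← hq]; simp

end GridPath

theorem mem_gridJ_horizontal {p q x y : ℕ} (h : ((x, y), (x, y + 1)) ∈ gridJ p q) :
    x = 0 ∧ y = 0 := by
  rcases h with ⟨i, j, -, -, h⟩ | h <;> simp only [Prod.ext_iff] at h <;> omega

theorem not_mem_gridJ_lastCol (p q x : ℕ) : ((x, q - 1), (x + 1, q - 1)) ∉ gridJ p q := by
  rintro (⟨i, j, -, hj, h⟩ | h) <;> simp only [Prod.ext_iff] at h <;> omega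

open GridPath in
theorem staircase_sum_eq_zero {p q : ℕ} {f : (ℕ × ℕ) × (ℕ × ℕ) → ℝ}
    (hf : ∀ P, IsPath (gridArc p q) (0, 0) (p - 1, q - 1) P → linCost f P = 0)
    (hpq : 2 < p + q) {j k : ℕ} (hj : j < q) (hk : k < p) :
    ∑ t ∈ Finset.range j, f ((0, t), (0, t + 1)) + ∑ r ∈ Finset.range k, f ((r, j), (r + 1, j)) +
      ∑ t ∈ Finset.range (q - 1 - j), f ((k, j + t), (k, j + t + 1)) +
      ∑ r ∈ Finset.range (p - 1 - k), f ((k + r, q - 1), (k + r + 1, q - 1)) = 0 := by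
  have hcost := hf _ <| isPath_route hpq
    (List.replicate j false ++ List.replicate k true ++ List.replicate (q - 1 - j) false ++
      List.replicate (p - 1 - k) true)
    (by simp only [List.count_append, List.count_replicate]; grind)
    (by simp only [List.count_append, List.count_replicate]; grind)
  rwa [linCost_route_staircase, Nat.add_sub_cancel' (Nat.le_sub_one_of_lt hj)] at hcost

theorem eq_zero_of_forall_isPath_linCost_eq_zero {p q : ℕ} {f : (ℕ × ℕ) × (ℕ × ℕ) → ℝ}
    (hp : 0 < p) (hq : 1 < q) (hJ : ∀ e ∉ gridJ p q, f e = 0)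
    (hf : ∀ P, IsPath (gridArc p q) (0, 0) (p - 1, q - 1) P → linCost f P = 0) : f = 0 := by
  have hstair := @staircase_sum_eq_zero p q f hf (by omega)
  have hlast (x : ℕ) : f ((x, q - 1), (x + 1, q - 1)) = 0 := hJ _ (not_mem_gridJ_lastCol p q x)
  have hfirst : f ((0, 0), (0, 1)) = 0 := by
    have h := hstair (j := 0) (k := 0) (by omega) hp
    simp only [Finset.range_zero, Finset.sum_empty, Nat.sub_zero, zero_add] at h
    rwa [Finset.sum_eq_single_of_mem 0 (Finset.mem_range.2 (by omega))
        (fun t _ ht => hJ _ (mt mem_gridJ_horizontal (by omega))),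
      Finset.sum_eq_zero (fun r _ => hlast r), add_zero] at h
  have hhor (x y : ℕ) : f ((x, y), (x, y + 1)) = 0 := by
    rcases em (x = 0 ∧ y = 0) with ⟨rfl, rfl⟩ | hxy
    · exact hfirst
    · exact hJ _ (mt mem_gridJ_horizontal hxy)
  have hcol {j k : ℕ} (hj : j < q) (hk : k < p) :
      ∑ r ∈ Finset.range k, f ((r, j), (r + 1, j)) = 0 := by
    simpa [hhor, hlast] using hstair hj hk
  funext e
  rw [Pi.zero_apply]
  rcases em (e ∈ gridJ p q) with (⟨i, j, hi, hj, rfl⟩ | rfl) | he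
  · have := hcol (j := j) (k := i + 1) (by omega) hi
    rwa [Finset.sum_range_succ, hcol (by omega) (by omega), zero_add] at this
  · exact hfirst
  · exact hJ e he

/-- Two linear cost vectors on `G_{p,q}` vanishing outside `J` that give every `s`-`t`
path the same cost must be equal. -/
theorem stmt_17 (p q : ℕ) (hp : 2 ≤ p) (hq : 2 ≤ q)
    (c d : (ℕ × ℕ) × (ℕ × ℕ) → ℝ)
    (hcJ : ∀ e ∉ gridJ p q, c e = 0) (hdJ : ∀ e ∉ gridJ p q, d e = 0)
    (h : ∀ P, IsPath (gridArc p q) (0, 0) (p - 1, q - 1) P →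
      linCost c P = linCost d P) :
    c = d := by
  have hJ (e) (he : e ∉ gridJ p q) : (c - d) e = 0 := by
    rw [Pi.sub_apply, hcJ e he, hdJ e he, sub_zero]
  have hpath (P) (hP : IsPath (gridArc p q) (0, 0) (p - 1, q - 1) P) : linCost (c - d) P = 0 := by
    rw [linCost_sub, h P hP, sub_self]
  exact sub_eq_zero.1 (eq_zero_of_forall_isPath_linCost_eq_zero (by omega) (by omega) hJ hpath)
end
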